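/- arXiv:math/0703316 — 2 statements merged into one kernel-verified Lean document; each statement's English description precedes it below -/
import Mathlib

section
/- Let E(k), for k ∈ (0,1), be a family of integral operators on a space with measure dg_b, whose Schwartz kernels satisfy |E(k; z, z')| ≤ C x(z)^{1−ε} · x'(z')/(x'(z') + k) in coordinates where x, x' ∈ (0,1) are boundary defining functions and the measure near the boundary is (dx/x) dy on (0,1) × S³. Then the operators E'(k) = E(k)/log k satisfy ‖E'(k)‖_{HS} ≤ C' |log k|^{−1/3} for k small, where ‖·‖_{HS} is the Hilbert–Schmidt norm. -/
/-!
Since `|E(k; z, z')| / |log k| ≤ (C / |log k|) · x^{1-ε} · x'/(x'+k)`, the squared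
Hilbert–Schmidt norm is bounded by `(C / log k)²` times the product of the b-integrals of
`x^{2(1-ε)}` and `(x'/(x'+k))²`. The first is finite because `ε < 1`; the second is at most
`(∫₀¹ dx'/(x'+k)) · σ(Y) = log((1+k)/k) · σ(Y) ≤ 2 |log k| σ(Y)`. Hence
`‖E'(k)‖²_HS = O(|log k|⁻¹)`, which is stronger than the claimed `|log k|^{-2/3}`.
-/

open Real MeasureTheory Filter

/-- The b-measure `(dx/x) ⊗ dσ(y)` on the collar `(0,1) × Y`. -/
noncomputable def bMeasure {Y : Type*} [MeasurableSpace Y] (σ : Measure Y) :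
    Measure (ℝ × Y) :=
  (((volume : Measure ℝ).restrict (Set.Ioo (0:ℝ) 1)).withDensity
      (fun x => ENNReal.ofReal x⁻¹)).prod σ

open Set
open scoped ENNReal

theorem integral_integral_sq_le_of_abs_le_mul {α : Type*} [MeasurableSpace α] {μ : Measure α}
    {K : α → α → ℝ} {f g : α → ℝ} {c a b : ℝ} (ha : 0 ≤ a) (hb : 0 ≤ b)
    (hf : ∫⁻ p, ENNReal.ofReal (f p ^ 2) ∂μ ≤ ENNReal.ofReal a)
    (hg : ∫⁻ q, ENNReal.ofReal (g q ^ 2) ∂μ ≤ ENNReal.ofReal b)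
    (hK : ∀ᵐ p ∂μ, ∀ᵐ q ∂μ, |K p q| ≤ c * (f p * g q)) :
    ∫ p, ∫ q, K p q ^ 2 ∂μ ∂μ ≤ c ^ 2 * (a * b) := by
  have hK_sq : ∀ᵐ p ∂μ, ∀ᵐ q ∂μ,
      ‖K p q ^ 2‖ₑ ≤ ENNReal.ofReal (c ^ 2 * f p ^ 2) * ENNReal.ofReal (g q ^ 2) := by
    filter_upwards [hK] with p hp
    filter_upwards [hp] with q hq
    rw [enorm_eq_ofReal (sq_nonneg _), ← ENNReal.ofReal_mul (by positivity)]
    refine ENNReal.ofReal_le_ofReal ?_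
    calc K p q ^ 2 = |K p q| ^ 2 := (sq_abs _).symm
      _ ≤ (c * (f p * g q)) ^ 2 := pow_le_pow_left₀ (abs_nonneg _) hq 2
      _ = c ^ 2 * f p ^ 2 * g q ^ 2 := by ring
  have hg_ne_top : ∫⁻ q, ENNReal.ofReal (g q ^ 2) ∂μ ≠ ∞ :=
    (hg.trans_lt ENNReal.ofReal_lt_top).ne
  have hlin : ENNReal.ofReal (∫ p, ∫ q, K p q ^ 2 ∂μ ∂μ)
      ≤ ENNReal.ofReal (c ^ 2 * (a * b)) := calc
    ENNReal.ofReal (∫ p, ∫ q, K p q ^ 2 ∂μ ∂μ)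
        ≤ ∫⁻ p, ‖∫ q, K p q ^ 2 ∂μ‖ₑ ∂μ :=
          (ofReal_le_enorm _).trans (enorm_integral_le_lintegral_enorm _)
    _ ≤ ∫⁻ p, ∫⁻ q, ‖K p q ^ 2‖ₑ ∂μ ∂μ :=
        lintegral_mono fun p => enorm_integral_le_lintegral_enorm _
    _ ≤ ∫⁻ p, ∫⁻ q, ENNReal.ofReal (c ^ 2 * f p ^ 2) * ENNReal.ofReal (g q ^ 2) ∂μ ∂μ := by
        refine lintegral_mono_ae ?_
        filter_upwards [hK_sq] with p hp using lintegral_mono_ae hp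
    _ = ENNReal.ofReal (c ^ 2) * (∫⁻ p, ENNReal.ofReal (f p ^ 2) ∂μ)
          * ∫⁻ q, ENNReal.ofReal (g q ^ 2) ∂μ := by
        simp_rw [lintegral_const_mul' _ _ ENNReal.ofReal_ne_top]
        rw [lintegral_mul_const' _ _ hg_ne_top]
        simp_rw [ENNReal.ofReal_mul (sq_nonneg c)]
        rw [lintegral_const_mul' _ _ ENNReal.ofReal_ne_top]
    _ ≤ ENNReal.ofReal (c ^ 2) * ENNReal.ofReal a * ENNReal.ofReal b := by gcongr
    _ = ENNReal.ofReal (c ^ 2 * (a * b)) := by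
        rw [ENNReal.ofReal_mul (sq_nonneg c), ENNReal.ofReal_mul ha, mul_assoc]
  exact (ENNReal.ofReal_le_ofReal_iff (by positivity)).1 hlin

theorem sqrt_div_le_sqrt_mul_rpow {X L t : ℝ} (hX : 0 ≤ X) (hL : 1 ≤ L) (ht : -1 / 2 ≤ t) :
    √(X / L) ≤ √X * L ^ t := by
  rw [sqrt_div hX, div_eq_mul_inv, sqrt_eq_rpow L, ← rpow_neg (by linarith)]
  exact mul_le_mul_of_nonneg_left (rpow_le_rpow_of_exponent_le hL (by linarith)) (sqrt_nonneg _)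

theorem lintegral_Ioo_inv_mul_rpow_sq_lt_top {a : ℝ} (ha : 0 < a) :
    ∫⁻ x in Ioo (0 : ℝ) 1, ENNReal.ofReal x⁻¹ * ENNReal.ofReal ((x ^ a) ^ 2) < ∞ := by
  have hpow : ∀ x ∈ Ioo (0 : ℝ) 1,
      ENNReal.ofReal x⁻¹ * ENNReal.ofReal ((x ^ a) ^ 2) = ENNReal.ofReal (x ^ (2 * a - 1)) := by
    intro x hx
    rw [← ENNReal.ofReal_mul (inv_nonneg.2 hx.1.le), ← rpow_natCast, ← rpow_mul hx.1.le,
      ← rpow_neg_one, ← rpow_add hx.1]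
    ring_nf
  rw [setLIntegral_congr_fun measurableSet_Ioo hpow]
  refine Integrable.lintegral_lt_top ?_
  exact (intervalIntegral.integrableOn_Ioo_rpow_iff zero_lt_one).2 (by linarith)

theorem lintegral_Ioo_inv_mul_sq_div_add_le {k : ℝ} (hk : 0 < k) :
    ∫⁻ x in Ioo (0 : ℝ) 1, ENNReal.ofReal x⁻¹ * ENNReal.ofReal ((x / (x + k)) ^ 2)
      ≤ ENNReal.ofReal (log (1 + k) - log k) := by
  have hpointwise : ∀ x ∈ Ioo (0 : ℝ) 1,
      ENNReal.ofReal x⁻¹ * ENNReal.ofReal ((x / (x + k)) ^ 2) ≤ ENNReal.ofReal (x + k)⁻¹ := by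
    intro x hx
    rw [← ENNReal.ofReal_mul (inv_nonneg.2 hx.1.le)]
    refine ENNReal.ofReal_le_ofReal ?_
    have hxk : 0 < x + k := by linarith [hx.1]
    calc x⁻¹ * (x / (x + k)) ^ 2 = x / (x + k) * (x + k)⁻¹ := by field_simp
      _ ≤ 1 * (x + k)⁻¹ := by gcongr; exact (div_le_one hxk).2 (by linarith)
      _ = (x + k)⁻¹ := one_mul _
  have hint : ∫ x in (0 : ℝ)..1, (x + k)⁻¹ = log (1 + k) - log k := by
    rw [intervalIntegral.integral_comp_add_right (fun u => u⁻¹) k, zero_add, add_comm,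
      integral_inv_of_pos hk (by linarith), log_div (by linarith) hk.ne']
  calc _ ≤ ∫⁻ x in Ioo (0 : ℝ) 1, ENNReal.ofReal (x + k)⁻¹ :=
        setLIntegral_mono (by fun_prop) hpointwise
    _ = ENNReal.ofReal (log (1 + k) - log k) := by
        rw [← hint, intervalIntegral.integral_of_le zero_le_one, integral_Ioc_eq_integral_Ioo,
          ofReal_integral_eq_lintegral_ofReal]
        · refine (ContinuousOn.integrableOn_Icc ?_).mono_set Ioo_subset_Icc_self
          exact ContinuousOn.inv₀ (by fun_prop) fun x hx => by linarith [hx.1]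
        · filter_upwards [ae_restrict_mem measurableSet_Ioo] with x hx
          exact inv_nonneg.2 (by linarith [hx.1])

section bMeasure

variable {Y : Type*} [MeasurableSpace Y] (σ : Measure Y)

theorem ae_bMeasure_fst_mem_Ioo : ∀ᵐ p ∂bMeasure σ, p.1 ∈ Ioo (0 : ℝ) 1 :=
  Measure.quasiMeasurePreserving_fst.ae <|
    withDensity_absolutelyContinuous _ _ (ae_restrict_mem measurableSet_Ioo)

theorem lintegral_bMeasure_fst [SFinite σ] {h : ℝ → ℝ≥0∞} (hh : Measurable h) :
    ∫⁻ p, h p.1 ∂bMeasure σ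
      = (∫⁻ x in Ioo (0 : ℝ) 1, ENNReal.ofReal x⁻¹ * h x) * σ univ := by
  rw [bMeasure, lintegral_prod (fun p : ℝ × Y => h p.1) (hh.comp measurable_fst).aemeasurable]
  simp only [lintegral_const]
  rw [lintegral_mul_const _ hh, lintegral_withDensity_eq_lintegral_mul _ (by fun_prop) hh]
  rfl

theorem lintegral_bMeasure_rpow_sq_lt_top [IsFiniteMeasure σ] {a : ℝ} (ha : 0 < a) :
    ∫⁻ p, ENNReal.ofReal ((p.1 ^ a) ^ 2) ∂bMeasure σ < ∞ := by
  rw [lintegral_bMeasure_fst σ (h := fun x => ENNReal.ofReal ((x ^ a) ^ 2)) (by fun_prop)]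
  exact ENNReal.mul_lt_top (lintegral_Ioo_inv_mul_rpow_sq_lt_top ha) (measure_lt_top σ univ)

theorem lintegral_bMeasure_sq_div_add_le [IsFiniteMeasure σ] {k : ℝ} (hk : 0 < k) :
    ∫⁻ p, ENNReal.ofReal ((p.1 / (p.1 + k)) ^ 2) ∂bMeasure σ
      ≤ ENNReal.ofReal ((log (1 + k) - log k) * (σ univ).toReal) := by
  rw [lintegral_bMeasure_fst σ (h := fun x => ENNReal.ofReal ((x / (x + k)) ^ 2)) (by fun_prop),
    ENNReal.ofReal_mul (by linarith [log_le_log hk (by linarith : k ≤ 1 + k)]),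
    ENNReal.ofReal_toReal (measure_ne_top σ univ)]
  gcongr
  exact lintegral_Ioo_inv_mul_sq_div_add_le hk

end bMeasure

theorem stmt12_general {Y : Type*} [MeasurableSpace Y] (σ : Measure Y) [IsFiniteMeasure σ]
    (E : ℝ → (ℝ × Y) → (ℝ × Y) → ℝ) (C ε : ℝ) (hε1 : ε < 1)
    (hbound : ∀ k ∈ Set.Ioo (0:ℝ) 1, ∀ p q : ℝ × Y,
      p.1 ∈ Set.Ioo (0:ℝ) 1 → q.1 ∈ Set.Ioo (0:ℝ) 1 →
      |E k p q| ≤ C * p.1 ^ (1 - ε) * (q.1 / (q.1 + k))) :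
    ∃ C' k₁ : ℝ, 0 < k₁ ∧ k₁ < 1 ∧ ∀ k ∈ Set.Ioo (0:ℝ) k₁,
      Real.sqrt (∫ p, ∫ q, (E k p q / Real.log k) ^ 2
          ∂(bMeasure σ) ∂(bMeasure σ))
        ≤ C' * |Real.log k| ^ (-(1:ℝ)/3) := by
  have hA := lintegral_bMeasure_rpow_sq_lt_top σ (sub_pos.2 hε1)
  set A := (∫⁻ p, ENNReal.ofReal ((p.1 ^ (1 - ε)) ^ 2) ∂bMeasure σ).toReal
  set S := (σ univ).toReal
  refine ⟨√(2 * C ^ 2 * A * S), exp (-1), exp_pos _, exp_lt_one_iff.2 (by norm_num),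
    fun k ⟨hk0, hk⟩ => ?_⟩
  have hk1 : k < 1 := hk.trans (exp_lt_one_iff.2 (by norm_num))
  have hL : |log k| = -log k := abs_of_neg (log_neg hk0 hk1)
  have hL1 : 1 < |log k| := by rw [hL]; simpa using neg_lt_neg (log_lt_log hk0 hk)
  have hx' : ∫⁻ q, ENNReal.ofReal ((q.1 / (q.1 + k)) ^ 2) ∂bMeasure σ
      ≤ ENNReal.ofReal (2 * |log k| * S) := by
    refine (lintegral_bMeasure_sq_div_add_le σ hk0).trans (ENNReal.ofReal_le_ofReal ?_)
    have : log (1 + k) ≤ k := by linarith [log_le_sub_one_of_pos (by linarith : 0 < 1 + k)]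
    gcongr
    linarith
  have hE : ∀ᵐ p ∂bMeasure σ, ∀ᵐ q ∂bMeasure σ,
      |E k p q / log k| ≤ C / |log k| * (p.1 ^ (1 - ε) * (q.1 / (q.1 + k))) := by
    filter_upwards [ae_bMeasure_fst_mem_Ioo σ] with p hp
    filter_upwards [ae_bMeasure_fst_mem_Ioo σ] with q hq
    rw [abs_div, div_mul_eq_mul_div, ← mul_assoc]
    exact div_le_div_of_nonneg_right (hbound k ⟨hk0, hk1⟩ p q hp hq) (abs_nonneg _)
  have hHS := integral_integral_sq_le_of_abs_le_mul ENNReal.toReal_nonneg (by positivity)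
    (ENNReal.ofReal_toReal hA.ne).ge hx' hE
  calc √(∫ p, ∫ q, (E k p q / log k) ^ 2 ∂bMeasure σ ∂bMeasure σ)
      ≤ √(2 * C ^ 2 * A * S / |log k|) := sqrt_le_sqrt (hHS.trans_eq (by field_simp; ring))
    _ ≤ √(2 * C ^ 2 * A * S) * |log k| ^ (-(1:ℝ) / 3) :=
        sqrt_div_le_sqrt_mul_rpow (by positivity) hL1.le (by norm_num)

/-- If the kernels `E(k; z, z')` satisfy
`|E(k; z, z')| ≤ C x^{1-ε} x'/(x'+k)`, then the operators `E'(k) = E(k)/log k`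
have Hilbert–Schmidt norm `≤ C' |log k|^{-1/3}` for small `k`. -/
theorem stmt12 {Y : Type*} [MeasurableSpace Y] (σ : Measure Y) [IsFiniteMeasure σ]
    (E : ℝ → (ℝ × Y) → (ℝ × Y) → ℝ) (C ε : ℝ) (hε : 0 < ε) (hε1 : ε < 1)
    (hmeas : ∀ k, Measurable (fun p : (ℝ × Y) × (ℝ × Y) => E k p.1 p.2))
    (hbound : ∀ k ∈ Set.Ioo (0:ℝ) 1, ∀ p q : ℝ × Y,
      p.1 ∈ Set.Ioo (0:ℝ) 1 → q.1 ∈ Set.Ioo (0:ℝ) 1 →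
      |E k p q| ≤ C * p.1 ^ (1 - ε) * (q.1 / (q.1 + k))) :
    ∃ C' k₁ : ℝ, 0 < k₁ ∧ k₁ < 1 ∧ ∀ k ∈ Set.Ioo (0:ℝ) k₁,
      Real.sqrt (∫ p, ∫ q, (E k p q / Real.log k) ^ 2
          ∂(bMeasure σ) ∂(bMeasure σ))
        ≤ C' * |Real.log k| ^ (-(1:ℝ)/3) :=
  stmt12_general σ E C ε hε1 hbound
end

section
/- Let K(z, z') be an integral kernel on a space M with ends, bounded pointwise (with respect to Riemannian measure on an n-dimensional asymptotically conic manifold, n ≥ 3) by x'^{n+δ} s^{α+δ} on {s = x/x' ≥ 1} for some δ > 0, α = 3 − m' with 0 ≤ m' ≤ 2. Then the associated operator is bounded on L^p(M) for 1 < p < n/α = n/(3 − m'). -/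
/-!
Schur test with the weight `h(x) = x ^ c`. Since `x ≤ 1` and `δ ≥ 0`, the kernel is dominated by
`x' ^ (n - a) * x ^ a` on `{x' ≤ x}`, while the measure is `x ^ (-n-1) dx dσ`. Hence
`∫ |K(z, ·)| h ^ q` reduces to `∫₀ˣ t ^ (c q - a - 1) dt`, finite when `a < c q`, and
`∫ |K(·, y)| h ^ p` to `∫_{x'}^∞ t ^ (a + c p - n - 1) dt`, finite when `c p < n - a`; with
`1/p + 1/q = 1` such a `c` exists exactly when `a p < n`.

The statement quantifies over all `f`, measurable or not. As the Bochner integral of a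
non-integrable function is `0`, restricting `f` to an essentially maximal set on which it is
a.e.-measurable can only increase `|T f|` and decrease `‖f‖_p`, so the measurable case suffices.
-/

open Real MeasureTheory Filter

/-- The model measure on an end of an `n`-dimensional asymptotically conic
manifold in the coordinate `x ~ 1/r`: `x^{-n-1} dx ⊗ dσ(y)` on `(0,1) × Y`. -/
noncomputable def acMeasure {Y : Type*} [MeasurableSpace Y] (n : ℕ) (σ : Measure Y) :
    Measure (ℝ × Y) :=
  (((volume : Measure ℝ).restrict (Set.Ioo (0:ℝ) 1)).withDensity
      (fun x => ENNReal.ofReal (x ^ (-(n:ℝ) - 1)))).prod σ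

open Set
open scoped ENNReal NNReal

namespace MeasureTheory

variable {α : Type*} [MeasurableSpace α]

lemma exists_measurableSet_aemeasurable_restrict_maximal (μ : Measure α) [SFinite μ] (f : α → ℝ) :
    ∃ U, MeasurableSet U ∧ AEMeasurable f (μ.restrict U) ∧
      ∀ s, MeasurableSet s → AEMeasurable f (μ.restrict s) → μ (s \ U) = 0 := by
  obtain ⟨ν, _, hμν, -⟩ := exists_isFiniteMeasure_absolutelyContinuous μ
  set S : Set (Set α) := {s | MeasurableSet s ∧ AEMeasurable f (μ.restrict s)}
  obtain ⟨u, -, hu_lim, hu_mem⟩ := exists_seq_tendsto_sSup (S := ν '' S)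
    ⟨0, ∅, ⟨.empty, by simp⟩, measure_empty⟩ (OrderTop.bddAbove _)
  choose s hsS hs using hu_mem
  have hUS : (⋃ i, s i) ∈ S :=
    ⟨.iUnion fun i => (hsS i).1, aemeasurable_iUnion_iff.2 fun i => (hsS i).2⟩
  refine ⟨⋃ i, s i, hUS.1, hUS.2, fun t ht hft => hμν ?_⟩
  have hUtS : (⋃ i, s i) ∪ t ∈ S := ⟨hUS.1.union ht, aemeasurable_union_iff.2 ⟨hUS.2, hft⟩⟩
  have hsup : ν ((⋃ i, s i) ∪ t) ≤ ν (⋃ i, s i) :=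
    calc _ ≤ sSup (ν '' S) := le_sSup ⟨_, hUtS, rfl⟩
      _ ≤ _ := le_of_tendsto' hu_lim fun i => hs i ▸ measure_mono (subset_iUnion s i)
  rw [← union_sdiff_left, measure_sdiff subset_union_left hUS.1.nullMeasurableSet
    (measure_ne_top _ _)]
  exact tsub_eq_zero_of_le hsup

lemma exists_aemeasurable_enorm_integral_le (μ : Measure α) [SFinite μ] {K : α → α → ℝ}
    (hK : Measurable (Function.uncurry K)) (f : α → ℝ) :
    ∃ g : α → ℝ, AEMeasurable g μ ∧ (∀ y, ‖g y‖ₑ ≤ ‖f y‖ₑ) ∧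
      ∀ z, ‖∫ y, K z y * f y ∂μ‖ₑ ≤ ‖∫ y, K z y * g y ∂μ‖ₑ := by
  obtain ⟨U, hU, hfU, hmax⟩ := exists_measurableSet_aemeasurable_restrict_maximal μ f
  refine ⟨U.indicator f, (aemeasurable_indicator_iff hU).2 hfU, fun y => ?_, fun z => ?_⟩
  · by_cases hy : y ∈ U <;> simp [hy]
  by_cases hint : Integrable (fun y => K z y * f y) μ
  · have hKz : Measurable (K z) := hK.comp measurable_prodMk_left
    set E := {y | K z y ≠ 0}
    have hE : MeasurableSet E := (hKz (measurableSet_singleton 0)).compl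
    have hfE : AEMeasurable f (μ.restrict E) := by
      refine ((hint.aemeasurable.mul hKz.inv.aemeasurable).restrict).congr ?_
      filter_upwards [ae_restrict_mem hE] with y hy
      simp only [Pi.mul_apply, Pi.inv_apply]
      rw [mul_right_comm, mul_inv_cancel₀ hy, one_mul]
    refine le_of_eq (congrArg _ (integral_congr_ae ?_))
    filter_upwards [measure_eq_zero_iff_ae_notMem.1 (hmax E hE hfE)] with y hy
    by_cases hKy : K z y = 0
    · simp [hKy]
    · have hyU : y ∈ U := by_contra fun hyU => hy ⟨hKy, hyU⟩
      simp [hyU]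
  · simp [integral_undef hint]

lemma lintegral_mul_le_of_weight {μ : Measure α} {p q : ℝ} (hpq : p.HolderConjugate q)
    {k F H : α → ℝ≥0∞} (hk : AEMeasurable k μ) (hF : AEMeasurable F μ) (hH : AEMeasurable H μ)
    (hH0 : ∀ᵐ y ∂μ, H y ≠ 0 ∧ H y ≠ ∞) :
    ∫⁻ y, k y * F y ∂μ ≤
      (∫⁻ y, k y * H y ^ q ∂μ) ^ (1 / q) * (∫⁻ y, k y * (H y ^ p)⁻¹ * F y ^ p ∂μ) ^ (1 / p) := by
  have hp := hpq.pos
  have hq := hpq.symm.pos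
  calc ∫⁻ y, k y * F y ∂μ
      = ∫⁻ y, ((fun y => k y ^ (1 / q) * H y) * fun y => k y ^ (1 / p) * ((H y)⁻¹ * F y)) y ∂μ := by
        refine lintegral_congr_ae ?_
        filter_upwards [hH0] with y hy
        calc k y * F y = (k y ^ (1 / q) * k y ^ (1 / p)) * ((H y * (H y)⁻¹) * F y) := by
              rw [← ENNReal.rpow_add_of_nonneg _ _ (by positivity) (by positivity), one_div,
                one_div, hpq.symm.inv_add_inv_eq_one, ENNReal.rpow_one,
                ENNReal.mul_inv_cancel hy.1 hy.2, one_mul]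
          _ = _ := by simp only [Pi.mul_apply]; ring
    _ ≤ _ := ENNReal.lintegral_mul_le_Lp_mul_Lq μ hpq.symm (by fun_prop) (by fun_prop)
    _ = _ := by
        congr 2 <;> refine lintegral_congr fun y => ?_
        · rw [ENNReal.mul_rpow_of_nonneg _ _ hq.le, ← ENNReal.rpow_mul, one_div_mul_cancel hq.ne',
            ENNReal.rpow_one]
        · rw [ENNReal.mul_rpow_of_nonneg _ _ hp.le, ENNReal.mul_rpow_of_nonneg _ _ hp.le,
            ← ENNReal.rpow_mul, one_div_mul_cancel hp.ne', ENNReal.rpow_one, ENNReal.inv_rpow,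
            mul_assoc]

theorem lintegral_rpow_enorm_integral_le_of_schur {μ : Measure α} [SFinite μ] {K : α → α → ℝ}
    (hK : Measurable (Function.uncurry K)) {p q : ℝ} (hpq : p.HolderConjugate q)
    {H : α → ℝ≥0∞} (hH : Measurable H) (hH0 : ∀ᵐ z ∂μ, H z ≠ 0 ∧ H z ≠ ∞) {c₁ c₂ : ℝ≥0∞}
    (hc₁ : c₁ ≠ ∞) (h₁ : ∀ᵐ z ∂μ, ∫⁻ y, ‖K z y‖ₑ * H y ^ q ∂μ ≤ c₁ * H z ^ q)
    (h₂ : ∀ᵐ y ∂μ, ∫⁻ z, ‖K z y‖ₑ * H z ^ p ∂μ ≤ c₂ * H y ^ p)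
    {f : α → ℝ} (hf : AEMeasurable f μ) :
    ∫⁻ z, ‖∫ y, K z y * f y ∂μ‖ₑ ^ p ∂μ ≤ c₁ ^ (p / q) * c₂ * ∫⁻ y, ‖f y‖ₑ ^ p ∂μ := by
  have hp := hpq.pos
  have hq := hpq.symm.pos
  have hKm : Measurable fun x : α × α => ‖K x.1 x.2‖ₑ := hK.enorm
  set I : α → ℝ≥0∞ := fun z => ∫⁻ y, ‖K z y‖ₑ * (H y ^ p)⁻¹ * ‖f y‖ₑ ^ p ∂μ
  have hpointwise : ∀ᵐ z ∂μ, ‖∫ y, K z y * f y ∂μ‖ₑ ^ p ≤ c₁ ^ (p / q) * (H z ^ p * I z) := by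
    filter_upwards [h₁] with z hz
    have hKz : Measurable fun y => ‖K z y‖ₑ := hKm.comp measurable_prodMk_left
    have hHolder := lintegral_mul_le_of_weight hpq hKz.aemeasurable hf.enorm hH.aemeasurable hH0
    calc ‖∫ y, K z y * f y ∂μ‖ₑ ^ p ≤ (∫⁻ y, ‖K z y‖ₑ * ‖f y‖ₑ ∂μ) ^ p := by
          gcongr
          simpa only [enorm_mul] using enorm_integral_le_lintegral_enorm (fun y => K z y * f y)
      _ ≤ ((c₁ * H z ^ q) ^ (1 / q) * I z ^ (1 / p)) ^ p := by
          gcongr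
          exact hHolder.trans (by gcongr)
      _ = c₁ ^ (p / q) * (H z ^ p * I z) := by
          rw [ENNReal.mul_rpow_of_nonneg c₁ _ (by positivity), ← ENNReal.rpow_mul (H z),
            mul_one_div_cancel hq.ne', ENNReal.rpow_one, ENNReal.mul_rpow_of_nonneg _ _ hp.le,
            ENNReal.mul_rpow_of_nonneg _ _ hp.le, ← ENNReal.rpow_mul c₁, ← ENNReal.rpow_mul (I z),
            one_div_mul_cancel hp.ne', ENNReal.rpow_one, one_div_mul_eq_div, mul_assoc]
  have hprod : AEMeasurable (Function.uncurry fun z y =>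
      H z ^ p * (‖K z y‖ₑ * (H y ^ p)⁻¹ * ‖f y‖ₑ ^ p)) (μ.prod μ) := by
    have hf₂ := hf.enorm.comp_snd (μ := μ)
    unfold Function.uncurry
    fun_prop
  calc ∫⁻ z, ‖∫ y, K z y * f y ∂μ‖ₑ ^ p ∂μ
      ≤ c₁ ^ (p / q) * ∫⁻ z, H z ^ p * I z ∂μ := by
        rw [← lintegral_const_mul' _ _ (by finiteness)]
        exact lintegral_mono_ae hpointwise
    _ = c₁ ^ (p / q) * ∫⁻ y, (H y ^ p)⁻¹ * ‖f y‖ₑ ^ p * ∫⁻ z, ‖K z y‖ₑ * H z ^ p ∂μ ∂μ := by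
        congr 1
        calc ∫⁻ z, H z ^ p * I z ∂μ
            = ∫⁻ z, ∫⁻ y, H z ^ p * (‖K z y‖ₑ * (H y ^ p)⁻¹ * ‖f y‖ₑ ^ p) ∂μ ∂μ :=
              lintegral_congr fun z => (lintegral_const_mul'' _ (by fun_prop)).symm
          _ = ∫⁻ y, ∫⁻ z, H z ^ p * (‖K z y‖ₑ * (H y ^ p)⁻¹ * ‖f y‖ₑ ^ p) ∂μ ∂μ :=
              lintegral_lintegral_swap hprod
          _ = _ := lintegral_congr fun y => by
              rw [← lintegral_const_mul _ (by fun_prop)]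
              exact lintegral_congr fun z => by ring
    _ ≤ c₁ ^ (p / q) * ∫⁻ y, c₂ * ‖f y‖ₑ ^ p ∂μ := by
        gcongr c₁ ^ (p / q) * ?_
        refine lintegral_mono_ae ?_
        filter_upwards [h₂, hH0] with y hy hHy
        calc (H y ^ p)⁻¹ * ‖f y‖ₑ ^ p * ∫⁻ z, ‖K z y‖ₑ * H z ^ p ∂μ
            ≤ (H y ^ p)⁻¹ * ‖f y‖ₑ ^ p * (c₂ * H y ^ p) := by gcongr
          _ = c₂ * ‖f y‖ₑ ^ p * ((H y ^ p)⁻¹ * H y ^ p) := by ring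
          _ = c₂ * ‖f y‖ₑ ^ p := by
              rw [ENNReal.inv_mul_cancel (by simp [hHy.1, hHy.2])
                (by simp [hHy.1, hHy.2]), mul_one]
    _ = c₁ ^ (p / q) * c₂ * ∫⁻ y, ‖f y‖ₑ ^ p ∂μ := by
        rw [lintegral_const_mul'' _ (by fun_prop), mul_assoc]

theorem eLpNorm_integral_le_of_schur {μ : Measure α} [SFinite μ] {K : α → α → ℝ}
    (hK : Measurable (Function.uncurry K)) {p q : ℝ} (hpq : p.HolderConjugate q)
    {H : α → ℝ≥0∞} (hH : Measurable H) (hH0 : ∀ᵐ z ∂μ, H z ≠ 0 ∧ H z ≠ ∞) {c₁ c₂ : ℝ≥0∞}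
    (hc₁ : c₁ ≠ ∞) (h₁ : ∀ᵐ z ∂μ, ∫⁻ y, ‖K z y‖ₑ * H y ^ q ∂μ ≤ c₁ * H z ^ q)
    (h₂ : ∀ᵐ y ∂μ, ∫⁻ z, ‖K z y‖ₑ * H z ^ p ∂μ ≤ c₂ * H y ^ p) (f : α → ℝ) :
    eLpNorm (fun z => ∫ y, K z y * f y ∂μ) (ENNReal.ofReal p) μ
      ≤ (c₁ ^ (p / q) * c₂) ^ (1 / p) * eLpNorm f (ENNReal.ofReal p) μ := by
  have hp := hpq.pos
  obtain ⟨g, hg, hgf, hfg⟩ := exists_aemeasurable_enorm_integral_le μ hK f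
  have hp0 : ENNReal.ofReal p ≠ 0 := by simpa using hp
  simp only [eLpNorm_eq_lintegral_rpow_enorm_toReal hp0 ENNReal.ofReal_ne_top,
    ENNReal.toReal_ofReal hp.le]
  calc (∫⁻ z, ‖∫ y, K z y * f y ∂μ‖ₑ ^ p ∂μ) ^ (1 / p)
      ≤ (∫⁻ z, ‖∫ y, K z y * g y ∂μ‖ₑ ^ p ∂μ) ^ (1 / p) := by gcongr with z; exact hfg z
    _ ≤ (c₁ ^ (p / q) * c₂ * ∫⁻ y, ‖g y‖ₑ ^ p ∂μ) ^ (1 / p) := by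
        gcongr
        exact lintegral_rpow_enorm_integral_le_of_schur hK hpq hH hH0 hc₁ h₁ h₂ hg
    _ ≤ (c₁ ^ (p / q) * c₂ * ∫⁻ y, ‖f y‖ₑ ^ p ∂μ) ^ (1 / p) := by gcongr with y; exact hgf y
    _ = _ := ENNReal.mul_rpow_of_nonneg _ _ (by positivity)

end MeasureTheory

lemma Real.rpow_add_mul_div_rpow_add_le {t x : ℝ} (n a : ℝ) {δ : ℝ} (ht : 0 < t) (hx : 0 < x)
    (hx1 : x ≤ 1) (hδ : 0 ≤ δ) : t ^ (n + δ) * (x / t) ^ (a + δ) ≤ t ^ (n - a) * x ^ a :=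
  calc t ^ (n + δ) * (x / t) ^ (a + δ) = t ^ (n - a) * (x ^ a * x ^ δ) := by
        rw [div_rpow hx.le ht.le, rpow_add hx, show n - a = (n + δ) - (a + δ) by ring,
          rpow_sub ht]
        field_simp
    _ ≤ t ^ (n - a) * (x ^ a * 1) := by gcongr; exact rpow_le_one hx.le hx1 hδ
    _ = t ^ (n - a) * x ^ a := by rw [mul_one]

lemma lintegral_Ioc_rpow {r x : ℝ} (hr : -1 < r) (hx : 0 ≤ x) :
    ∫⁻ t in Ioc 0 x, ENNReal.ofReal (t ^ r) = ENNReal.ofReal (x ^ (r + 1) / (r + 1)) := by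
  rw [← ofReal_integral_eq_lintegral_ofReal, ← intervalIntegral.integral_of_le hx,
    integral_rpow (Or.inl hr), zero_rpow (by linarith), sub_zero]
  · exact (intervalIntegrable_iff_integrableOn_Ioc_of_le hx).1
      (intervalIntegral.intervalIntegrable_rpow' hr)
  · filter_upwards [ae_restrict_mem measurableSet_Ioc] with t ht
    exact rpow_nonneg ht.1.le r

lemma lintegral_Ioi_rpow {e s : ℝ} (he : e < -1) (hs : 0 < s) :
    ∫⁻ t in Ioi s, ENNReal.ofReal (t ^ e) = ENNReal.ofReal (-s ^ (e + 1) / (e + 1)) := by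
  rw [← ofReal_integral_eq_lintegral_ofReal (integrableOn_Ioi_rpow_of_lt he hs),
    integral_Ioi_rpow_of_lt he hs]
  filter_upwards [ae_restrict_mem measurableSet_Ioi] with t ht
  exact rpow_nonneg (hs.trans ht).le e

section acMeasure

variable {Y : Type*} [MeasurableSpace Y] (σ : Measure Y) (n : ℕ)

instance [SFinite σ] : SFinite (acMeasure n σ) := by
  unfold acMeasure
  infer_instance

lemma acMeasure_ae_mem_Ioo : ∀ᵐ z ∂acMeasure n σ, z.1 ∈ Ioo (0 : ℝ) 1 :=
  Measure.quasiMeasurePreserving_fst.ae <|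
    (withDensity_absolutelyContinuous _ _).ae_le (ae_restrict_mem measurableSet_Ioo)

lemma lintegral_acMeasure_le [SFinite σ] {g : ℝ × Y → ℝ≥0∞} {ψ : ℝ → ℝ≥0∞} (hψ : Measurable ψ)
    (hg : ∀ y : ℝ × Y, y.1 ∈ Ioo 0 1 → g y ≤ ENNReal.ofReal (y.1 ^ ((n : ℝ) + 1)) * ψ y.1) :
    ∫⁻ y, g y ∂acMeasure n σ ≤ σ univ * ∫⁻ t in Ioo 0 1, ψ t := by
  have hw : Measurable fun t : ℝ => ENNReal.ofReal (t ^ ((n : ℝ) + 1)) * ψ t := by fun_prop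
  calc ∫⁻ y, g y ∂acMeasure n σ
      ≤ ∫⁻ y, ENNReal.ofReal (y.1 ^ ((n : ℝ) + 1)) * ψ y.1 ∂acMeasure n σ := by
        refine lintegral_mono_ae ?_
        filter_upwards [acMeasure_ae_mem_Ioo σ n] with y hy using hg y hy
    _ = σ univ * ∫⁻ t in Ioo 0 1,
          ENNReal.ofReal (t ^ (-(n : ℝ) - 1)) * (ENNReal.ofReal (t ^ ((n : ℝ) + 1)) * ψ t) := by
        rw [acMeasure,
          lintegral_prod (fun y : ℝ × Y => ENNReal.ofReal (y.1 ^ ((n : ℝ) + 1)) * ψ y.1)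
            (by fun_prop)]
        simp only [lintegral_const]
        rw [lintegral_mul_const _ hw, lintegral_withDensity_eq_lintegral_mul _ (by fun_prop) hw,
          mul_comm]
        rfl
    _ = σ univ * ∫⁻ t in Ioo 0 1, ψ t := by
        congr 1
        refine setLIntegral_congr_fun measurableSet_Ioo fun t ht => ?_
        rw [← mul_assoc, ← ENNReal.ofReal_mul (rpow_nonneg ht.1.le _), ← rpow_add ht.1]
        norm_num

end acMeasure

section HardyKernel

variable {Y : Type*} [MeasurableSpace Y] {σ : Measure Y} [SFinite σ] {n : ℕ} {a : ℝ}
  {K : ℝ × Y → ℝ × Y → ℝ}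

lemma lintegral_enorm_mul_rpow_snd_le (hsupp : ∀ z y : ℝ × Y, z.1 < y.1 → K z y = 0)
    (hK : ∀ z y : ℝ × Y, z.1 ∈ Ioo 0 1 → y.1 ∈ Ioo 0 1 → y.1 ≤ z.1 →
      |K z y| ≤ y.1 ^ ((n : ℝ) - a) * z.1 ^ a)
    {b : ℝ} (hab : a < b) {z : ℝ × Y} (hz : z.1 ∈ Ioo 0 1) :
    ∫⁻ y, ‖K z y‖ₑ * ENNReal.ofReal (y.1 ^ b) ∂acMeasure n σ
      ≤ σ univ * ENNReal.ofReal (1 / (b - a)) * ENNReal.ofReal (z.1 ^ b) := by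
  set x := z.1
  have hx : 0 < x := hz.1
  calc ∫⁻ y, ‖K z y‖ₑ * ENNReal.ofReal (y.1 ^ b) ∂acMeasure n σ
      ≤ σ univ * ∫⁻ t in Ioo 0 1,
          (Ioc 0 x).indicator (fun t => ENNReal.ofReal (x ^ a * t ^ (b - a - 1))) t := by
        refine lintegral_acMeasure_le σ n (Measurable.indicator (by fun_prop) measurableSet_Ioc)
          fun y hy => ?_
        by_cases hyx : y.1 ≤ x
        · have ht : 0 < y.1 := hy.1
          rw [indicator_of_mem (show y.1 ∈ Ioc 0 x from ⟨ht, hyx⟩),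
            ← ENNReal.ofReal_mul (by positivity),
            Real.enorm_eq_ofReal_abs, ← ENNReal.ofReal_mul (abs_nonneg _)]
          refine ENNReal.ofReal_le_ofReal ?_
          have hexp : y.1 ^ ((n : ℝ) + 1) * y.1 ^ (b - a - 1) = y.1 ^ ((n : ℝ) - a) * y.1 ^ b := by
            rw [← rpow_add ht, ← rpow_add ht]
            ring_nf
          calc |K z y| * y.1 ^ b ≤ y.1 ^ ((n : ℝ) - a) * x ^ a * y.1 ^ b := by
                gcongr
                exact hK z y hz hy hyx
            _ = y.1 ^ ((n : ℝ) + 1) * (x ^ a * y.1 ^ (b - a - 1)) := by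
                linear_combination (-x ^ a) * hexp
        · simp [hsupp z y (not_le.1 hyx)]
    _ ≤ σ univ * ∫⁻ t in Ioc 0 x, ENNReal.ofReal (x ^ a) * ENNReal.ofReal (t ^ (b - a - 1)) := by
        rw [lintegral_indicator measurableSet_Ioc, Measure.restrict_restrict measurableSet_Ioc]
        gcongr σ univ * ?_
        refine (lintegral_mono_set inter_subset_left).trans_eq ?_
        refine setLIntegral_congr_fun measurableSet_Ioc fun t ht => ?_
        exact ENNReal.ofReal_mul (by positivity)
    _ = σ univ * ENNReal.ofReal (1 / (b - a)) * ENNReal.ofReal (x ^ b) := by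
        rw [lintegral_const_mul' _ _ ENNReal.ofReal_ne_top,
          lintegral_Ioc_rpow (by linarith) hx.le, sub_add_cancel, mul_assoc,
          ← ENNReal.ofReal_mul (by positivity), ← ENNReal.ofReal_mul (by positivity)]
        congr 2
        conv_rhs => rw [← add_sub_cancel a b, rpow_add hx]
        ring

lemma lintegral_enorm_mul_rpow_fst_le (hsupp : ∀ z y : ℝ × Y, z.1 < y.1 → K z y = 0)
    (hK : ∀ z y : ℝ × Y, z.1 ∈ Ioo 0 1 → y.1 ∈ Ioo 0 1 → y.1 ≤ z.1 →
      |K z y| ≤ y.1 ^ ((n : ℝ) - a) * z.1 ^ a)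
    {b : ℝ} (hb : b < n - a) {y : ℝ × Y} (hy : y.1 ∈ Ioo 0 1) :
    ∫⁻ z, ‖K z y‖ₑ * ENNReal.ofReal (z.1 ^ b) ∂acMeasure n σ
      ≤ σ univ * ENNReal.ofReal (1 / (n - a - b)) * ENNReal.ofReal (y.1 ^ b) := by
  set t := y.1
  have ht : 0 < t := hy.1
  calc ∫⁻ z, ‖K z y‖ₑ * ENNReal.ofReal (z.1 ^ b) ∂acMeasure n σ
      ≤ σ univ * ∫⁻ x in Ioo 0 1,
          (Ici t).indicator
            (fun x => ENNReal.ofReal (t ^ ((n : ℝ) - a) * x ^ (a + b - n - 1))) x := by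
        refine lintegral_acMeasure_le σ n (Measurable.indicator (by fun_prop) measurableSet_Ici)
          fun z hz => ?_
        by_cases htz : t ≤ z.1
        · have hx : 0 < z.1 := hz.1
          rw [indicator_of_mem (mem_Ici.2 htz), ← ENNReal.ofReal_mul (by positivity),
            Real.enorm_eq_ofReal_abs, ← ENNReal.ofReal_mul (abs_nonneg _)]
          refine ENNReal.ofReal_le_ofReal ?_
          have hexp : z.1 ^ ((n : ℝ) + 1) * z.1 ^ (a + b - n - 1) = z.1 ^ a * z.1 ^ b := by
            rw [← rpow_add hx, ← rpow_add hx]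
            ring_nf
          calc |K z y| * z.1 ^ b ≤ t ^ ((n : ℝ) - a) * z.1 ^ a * z.1 ^ b := by
                gcongr
                exact hK z y hz hy htz
            _ = z.1 ^ ((n : ℝ) + 1) * (t ^ ((n : ℝ) - a) * z.1 ^ (a + b - n - 1)) := by
                linear_combination (-t ^ ((n : ℝ) - a)) * hexp
        · simp [hsupp z y (not_le.1 htz)]
    _ ≤ σ univ * ∫⁻ x in Ioi t,
          ENNReal.ofReal (t ^ ((n : ℝ) - a)) * ENNReal.ofReal (x ^ (a + b - n - 1)) := by
        rw [lintegral_indicator measurableSet_Ici, Measure.restrict_restrict measurableSet_Ici]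
        gcongr σ univ * ?_
        refine (lintegral_mono_set inter_subset_left).trans_eq ?_
        rw [← setLIntegral_congr Ioi_ae_eq_Ici]
        refine setLIntegral_congr_fun measurableSet_Ioi fun x hx => ?_
        exact ENNReal.ofReal_mul (by positivity)
    _ = σ univ * ENNReal.ofReal (1 / (n - a - b)) * ENNReal.ofReal (t ^ b) := by
        rw [lintegral_const_mul' _ _ ENNReal.ofReal_ne_top,
          lintegral_Ioi_rpow (by linarith) ht, sub_add_cancel, mul_assoc,
          ← ENNReal.ofReal_mul (by positivity), ← ENNReal.ofReal_mul (by positivity)]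
        congr 2
        have hexp : t ^ ((n : ℝ) - a) * t ^ (a + b - n) = t ^ b := by
          rw [← rpow_add ht]
          ring_nf
        have hne : a + b - n ≠ 0 := by linarith
        have hne' : (n : ℝ) - a - b ≠ 0 := by linarith
        field_simp
        linear_combination (a + b - n) * hexp

end HardyKernel

theorem exists_eLpNorm_integral_le_of_hardy {Y : Type*} [MeasurableSpace Y] {σ : Measure Y}
    [IsFiniteMeasure σ] {n : ℕ} {a : ℝ} {K : ℝ × Y → ℝ × Y → ℝ}
    (hKm : Measurable (Function.uncurry K)) (hsupp : ∀ z y : ℝ × Y, z.1 < y.1 → K z y = 0)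
    (hK : ∀ z y : ℝ × Y, z.1 ∈ Ioo 0 1 → y.1 ∈ Ioo 0 1 → y.1 ≤ z.1 →
      |K z y| ≤ y.1 ^ ((n : ℝ) - a) * z.1 ^ a)
    {p : ℝ} (hp : 1 < p) (hap : a * p < n) :
    ∃ C : ℝ≥0, ∀ f : ℝ × Y → ℝ,
      eLpNorm (fun z => ∫ y, K z y * f y ∂acMeasure n σ) (ENNReal.ofReal p) (acMeasure n σ)
        ≤ C * eLpNorm f (ENNReal.ofReal p) (acMeasure n σ) := by
  have hpq : p.HolderConjugate p.conjExponent := .conjExponent hp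
  set q := p.conjExponent
  have hp0 := hpq.pos
  have hq0 := hpq.symm.pos
  obtain ⟨c, hcq, hcp⟩ : ∃ c, a / q < c ∧ c < (n - a) / p := exists_between <| by
    show a / (p / (p - 1)) < (n - a) / p
    rw [div_div_eq_mul_div, div_lt_div_iff_of_pos_right hp0]
    linarith
  replace hcq : a < c * q := (div_lt_iff₀ hq0).1 hcq
  replace hcp : c * p < n - a := (lt_div_iff₀ hp0).1 hcp
  set H : ℝ × Y → ℝ≥0∞ := fun z => ENNReal.ofReal (z.1 ^ c)
  have hH_rpow : ∀ z : ℝ × Y, 0 < z.1 → ∀ r, 0 ≤ r → H z ^ r = ENNReal.ofReal (z.1 ^ (c * r)) :=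
    fun z hz r hr => by rw [ENNReal.ofReal_rpow_of_nonneg (by positivity) hr, rpow_mul hz.le]
  have hae := acMeasure_ae_mem_Ioo σ n
  set c₁ := σ univ * ENNReal.ofReal (1 / (c * q - a))
  set c₂ := σ univ * ENNReal.ofReal (1 / (n - a - c * p))
  have hT := eLpNorm_integral_le_of_schur (μ := acMeasure n σ) hKm hpq (H := H) (c₁ := c₁)
    (c₂ := c₂) (by fun_prop) ?_ (by finiteness) ?_ ?_
  · refine ⟨((c₁ ^ (p / q) * c₂) ^ (1 / p)).toNNReal, fun f => ?_⟩
    rw [ENNReal.coe_toNNReal (by finiteness)]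
    exact hT f
  · filter_upwards [hae] with z hz
    exact ⟨(ENNReal.ofReal_pos.2 (rpow_pos_of_pos hz.1 c)).ne', ENNReal.ofReal_ne_top⟩
  · filter_upwards [hae] with z hz
    calc ∫⁻ y, ‖K z y‖ₑ * H y ^ q ∂acMeasure n σ
        = ∫⁻ y, ‖K z y‖ₑ * ENNReal.ofReal (y.1 ^ (c * q)) ∂acMeasure n σ := by
          refine lintegral_congr_ae ?_
          filter_upwards [hae] with y hy
          rw [hH_rpow y hy.1 q hq0.le]
      _ ≤ c₁ * ENNReal.ofReal (z.1 ^ (c * q)) := lintegral_enorm_mul_rpow_snd_le hsupp hK hcq hz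
      _ = c₁ * H z ^ q := by rw [hH_rpow z hz.1 q hq0.le]
  · filter_upwards [hae] with y hy
    calc ∫⁻ z, ‖K z y‖ₑ * H z ^ p ∂acMeasure n σ
        = ∫⁻ z, ‖K z y‖ₑ * ENNReal.ofReal (z.1 ^ (c * p)) ∂acMeasure n σ := by
          refine lintegral_congr_ae ?_
          filter_upwards [hae] with z hz
          rw [hH_rpow z hz.1 p hp0.le]
      _ ≤ c₂ * ENNReal.ofReal (y.1 ^ (c * p)) := lintegral_enorm_mul_rpow_fst_le hsupp hK hcp hy
      _ = c₂ * H y ^ p := by rw [hH_rpow y hy.1 p hp0.le]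

theorem stmt15_general {Y : Type*} [MeasurableSpace Y] (σ : Measure Y) [IsFiniteMeasure σ]
    (n : ℕ) (m' δ : ℝ) (hδ : 0 < δ)
    (K : (ℝ × Y) → (ℝ × Y) → ℝ)
    (hmeas : Measurable (fun p : (ℝ × Y) × (ℝ × Y) => K p.1 p.2))
    (hsupp : ∀ p q : ℝ × Y, p.1 < q.1 → K p q = 0)
    (hbound : ∀ p q : ℝ × Y, p.1 ∈ Set.Ioo (0:ℝ) 1 → q.1 ∈ Set.Ioo (0:ℝ) 1 →
      q.1 ≤ p.1 →
      |K p q| ≤ q.1 ^ ((n:ℝ) + δ) * (p.1 / q.1) ^ ((3 - m') + δ)) :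
    ∀ p : ℝ, 1 < p → p < n / (3 - m') →
      ∃ C : ℝ, 0 ≤ C ∧ ∀ f : ℝ × Y → ℝ,
        eLpNorm (fun z => ∫ z', K z z' * f z' ∂(acMeasure n σ))
            (ENNReal.ofReal p) (acMeasure n σ)
          ≤ ENNReal.ofReal C * eLpNorm f (ENNReal.ofReal p) (acMeasure n σ) := by
  intro p hp hpn
  -- for `3 - m' ≤ 0` the quotient `n / (3 - m')` is `≤ 0`, also through the junk value `n / 0 = 0`
  have ha : 0 < 3 - m' := by
    rcases div_pos_iff.1 (show 0 < (n : ℝ) / (3 - m') by linarith) with h | h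
    · exact h.2
    · exact absurd h.1 (not_lt.2 n.cast_nonneg)
  have hK (z y : ℝ × Y) (hz : z.1 ∈ Ioo 0 1) (hy : y.1 ∈ Ioo 0 1) (hyz : y.1 ≤ z.1) :
      |K z y| ≤ y.1 ^ ((n : ℝ) - (3 - m')) * z.1 ^ (3 - m') :=
    (hbound z y hz hy hyz).trans (rpow_add_mul_div_rpow_add_le _ _ hy.1 hz.1 hz.2.le hδ.le)
  obtain ⟨C, hC⟩ :=
    exists_eLpNorm_integral_le_of_hardy (σ := σ) hmeas hsupp hK hp ((lt_div_iff₀' ha).1 hpn)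
  exact ⟨C, C.2, fun f => by simpa using hC f⟩

/-- Schur-type estimate: a kernel supported in `{s = x/x' ≥ 1}` and bounded there
by `x'^{n+δ} s^{α+δ}` with `α = 3 - m'`, `δ > 0`, defines an operator bounded on
`L^p` for `1 < p < n/α = n/(3-m')`. -/
theorem stmt15 {Y : Type*} [MeasurableSpace Y] (σ : Measure Y) [IsFiniteMeasure σ]
    (n : ℕ) (hn : 3 ≤ n) (m' δ : ℝ) (hm : 0 ≤ m') (hm2 : m' ≤ 2) (hδ : 0 < δ)
    (K : (ℝ × Y) → (ℝ × Y) → ℝ)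
    (hmeas : Measurable (fun p : (ℝ × Y) × (ℝ × Y) => K p.1 p.2))
    (hsupp : ∀ p q : ℝ × Y, p.1 < q.1 → K p q = 0)
    (hbound : ∀ p q : ℝ × Y, p.1 ∈ Set.Ioo (0:ℝ) 1 → q.1 ∈ Set.Ioo (0:ℝ) 1 →
      q.1 ≤ p.1 →
      |K p q| ≤ q.1 ^ ((n:ℝ) + δ) * (p.1 / q.1) ^ ((3 - m') + δ)) :
    ∀ p : ℝ, 1 < p → p < n / (3 - m') →
      ∃ C : ℝ, 0 ≤ C ∧ ∀ f : ℝ × Y → ℝ,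
        eLpNorm (fun z => ∫ z', K z z' * f z' ∂(acMeasure n σ))
            (ENNReal.ofReal p) (acMeasure n σ)
          ≤ ENNReal.ofReal C * eLpNorm f (ENNReal.ofReal p) (acMeasure n σ) :=
  stmt15_general σ n m' δ hδ K hmeas hsupp hbound
end
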